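/- Let Σ be a real (n+1)×(n+1) positive definite Toeplitz matrix, D̃ = diag(d_1,…,d_{n+1}) with 0 < d_1 ≤ … ≤ d_{n+1}, F the first-difference matrix (1's on diagonal, −1's on first subdiagonal), and R = F D̃ Fᵀ. If b ∈ ℝ^{n+1} is nonzero and satisfies (Σ + R) b = c·e_1 for some real c, then all zeros of the polynomial z^n b(z) = b_0 z^n + b_1 z^{n−1} + … + b_n lie strictly inside the unit circle. -/

import Mathlib

open Matrix

/-- A matrix is Toeplitz if its entries depend only on the difference of indices. -/
def IsToeplitz {n : ℕ} (M : Matrix (Fin (n+1)) (Fin (n+1)) ℝ) : Prop :=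
  ∀ i j k l : Fin (n+1), (i : ℤ) - (j : ℤ) = (k : ℤ) - (l : ℤ) → M i j = M k l

/-- The first-difference matrix: 1's on the diagonal and -1's on the first subdiagonal. -/
def diffMatrix (n : ℕ) : Matrix (Fin (n+1)) (Fin (n+1)) ℝ :=
  fun i j => if i = j then 1 else if (j : ℕ) + 1 = (i : ℕ) then -1 else 0

/-!
If `z` is a root, Horner's scheme writes `b = u - z • delay u` with `u (last n) = 0`. Because
`(S + R) b` is a multiple of `e₁` and `delay u` vanishes at `0`, the vector `delay u` is orthogonal
to `b` for the Hermitian form `Q` of `S + R`, which yields `Q b = Q u - |z|² Q (delay u)`.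
The Toeplitz part of `Q` is invariant under the delay, and since the weights `dₖ` increase, delaying
`u` can only increase the part of `Q` coming from `R = F D̃ Fᵀ`. Hence `Q u ≤ Q (delay u)`, and
`0 < Q b` forces `|z| < 1`.
-/

namespace Fin

variable {n : ℕ} {α : Type*} [Zero α]

def delay (x : Fin (n + 1) → α) : Fin (n + 1) → α := Fin.cons 0 (x ∘ Fin.castSucc)

def advance (x : Fin (n + 1) → α) : Fin (n + 1) → α := Fin.snoc (x ∘ Fin.succ) 0

@[simp] lemma delay_zero (x : Fin (n + 1) → α) : delay x 0 = 0 := rfl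

@[simp] lemma delay_succ (x : Fin (n + 1) → α) (i : Fin n) : delay x i.succ = x i.castSucc := rfl

@[simp] lemma advance_castSucc (x : Fin (n + 1) → α) (i : Fin n) :
    advance x i.castSucc = x i.succ := by
  simp [advance]

@[simp] lemma advance_last (x : Fin (n + 1) → α) : advance x (last n) = 0 := by
  simp [advance]

lemma advance_delay {x : Fin (n + 1) → α} (hx : x (last n) = 0) : advance (delay x) = x := by
  ext i
  cases i using Fin.lastCases <;> simp [hx]

lemma comp_delay {β : Type*} [Zero β] {f : α → β} (hf : f 0 = 0) (x : Fin (n + 1) → α) :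
    (fun i => f (delay x i)) = delay fun i => f (x i) := by
  ext i
  cases i using Fin.cases <;> simp [hf]

lemma Iic_succ (i : Fin n) : Finset.Iic i.succ = insert i.succ (Finset.Iic i.castSucc) := by
  ext j
  simp [Fin.le_def, Fin.ext_iff]
  omega

lemma sum_mul_sq_sub_advance_le {w : Fin (n + 1) → ℝ} (hw : Monotone w) (hw₀ : 0 ≤ w 0)
    {x : Fin (n + 1) → ℝ} (hx : x (last n) = 0) :
    ∑ k, w k * (x - advance x) k ^ 2 ≤ ∑ k, w k * (delay x - x) k ^ 2 := by
  rw [Fin.sum_univ_castSucc, Fin.sum_univ_succ]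
  simp only [Pi.sub_apply, advance_castSucc, advance_last, delay_zero, delay_succ, hx, sub_zero,
    zero_sub, neg_sq]
  have hterms := Finset.sum_le_sum (s := Finset.univ) fun (i : Fin n) _ =>
    mul_le_mul_of_nonneg_right (hw i.castSucc_le_succ) (sq_nonneg (x i.castSucc - x i.succ))
  linarith [mul_nonneg hw₀ (sq_nonneg (x 0))]

end Fin

section Horner

variable {R : Type*} [CommRing R] {n : ℕ}

def horner (b : Fin (n + 1) → R) (z : R) (i : Fin (n + 1)) : R :=
  ∑ j ∈ Finset.Iic i, b j * z ^ ((i : ℕ) - j)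

lemma horner_last (b : Fin (n + 1) → R) (z : R) :
    horner b z (Fin.last n) = ∑ j, b j * z ^ (n - (j : ℕ)) := by
  simp [horner, ← Fin.top_eq_last, Finset.Iic_top]

lemma horner_succ (b : Fin (n + 1) → R) (z : R) (i : Fin n) :
    horner b z i.succ = z * horner b z i.castSucc + b i.succ := by
  rw [horner, Fin.Iic_succ, Finset.sum_insert (by simp), horner, Finset.mul_sum, add_comm]
  simp only [Fin.val_succ, Fin.val_castSucc, Nat.sub_self, pow_zero, mul_one]
  congr 1
  refine Finset.sum_congr rfl fun j hj => ?_
  rw [Finset.mem_Iic, Fin.le_def, Fin.val_castSucc] at hj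
  rw [Nat.sub_add_comm hj, pow_succ]
  ring

lemma horner_sub_smul_delay (b : Fin (n + 1) → R) (z : R) :
    horner b z - z • Fin.delay (horner b z) = b := by
  ext i
  cases i using Fin.cases with
  | zero => simp [horner, show Finset.Iic (0 : Fin (n + 1)) = {0} from Finset.Iic_bot]
  | succ i => simp [horner_succ]

end Horner

section Forms

variable {ι m : Type*} [Fintype ι]

lemma dotProduct_mul_diagonal_mul_transpose_mulVec {R : Type*} [CommRing R] [Fintype m]
    [DecidableEq ι] (B : Matrix m ι R) (d : ι → R) (x : m → R) :
    x ⬝ᵥ (B * diagonal d * Bᵀ) *ᵥ x = ∑ k, d k * (Bᵀ *ᵥ x) k ^ 2 := by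
  rw [← mulVec_mulVec, ← mulVec_mulVec, dotProduct_mulVec, ← mulVec_transpose, dotProduct]
  simp only [mulVec_diagonal]
  exact Finset.sum_congr rfl fun k _ => by ring

lemma map_ofReal_mulVec_ofReal (A : Matrix ι ι ℝ) (x : ι → ℝ) :
    A.map Complex.ofReal *ᵥ (fun i => (x i : ℂ)) = fun i => ((A *ᵥ x) i : ℂ) := by
  ext i
  simp [mulVec, dotProduct]

lemma star_dotProduct_map_ofReal_mulVec_ofReal (A : Matrix ι ι ℝ) (x : ι → ℝ) :
    star (fun i => (x i : ℂ)) ⬝ᵥ A.map Complex.ofReal *ᵥ (fun i => (x i : ℂ)) =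
      ((x ⬝ᵥ A *ᵥ x : ℝ) : ℂ) := by
  simp [map_ofReal_mulVec_ofReal, dotProduct]

lemma re_star_dotProduct_map_ofReal_mulVec (A : Matrix ι ι ℝ) (x : ι → ℂ) :
    (star x ⬝ᵥ A.map Complex.ofReal *ᵥ x).re =
      (fun i => (x i).re) ⬝ᵥ A *ᵥ (fun i => (x i).re) +
        (fun i => (x i).im) ⬝ᵥ A *ᵥ (fun i => (x i).im) := by
  simp [dotProduct, mulVec, Complex.re_sum, Finset.mul_sum, ← Finset.sum_add_distrib]

lemma Matrix.IsHermitian.star_dotProduct_mulVec_comm {A : Matrix ι ι ℂ} (hA : A.IsHermitian)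
    (u v : ι → ℂ) : star (star v ⬝ᵥ A *ᵥ u) = star u ⬝ᵥ A *ᵥ v := by
  rw [star_dotProduct, star_mulVec, ← dotProduct_mulVec, hA.eq, star_star]

lemma Matrix.IsHermitian.re_dotProduct_mulVec_sub_smul {A : Matrix ι ι ℂ} (hA : A.IsHermitian)
    {u v : ι → ℂ} {z : ℂ} (h : star v ⬝ᵥ A *ᵥ (u - z • v) = 0) :
    (star (u - z • v) ⬝ᵥ A *ᵥ (u - z • v)).re =
      (star u ⬝ᵥ A *ᵥ u).re - ‖z‖ ^ 2 * (star v ⬝ᵥ A *ᵥ v).re := by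
  have hvu : star v ⬝ᵥ A *ᵥ u = z * (star v ⬝ᵥ A *ᵥ v) := by
    rwa [mulVec_sub, mulVec_smul, dotProduct_sub, dotProduct_smul, sub_eq_zero] at h
  calc (star (u - z • v) ⬝ᵥ A *ᵥ (u - z • v)).re
      = (star u ⬝ᵥ A *ᵥ (u - z • v) - star z * (star v ⬝ᵥ A *ᵥ (u - z • v))).re := by
        rw [star_sub, star_smul, sub_dotProduct, smul_dotProduct, smul_eq_mul]
    _ = (star u ⬝ᵥ A *ᵥ u - z * star (star v ⬝ᵥ A *ᵥ u)).re := by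
        rw [h, mul_zero, sub_zero, mulVec_sub, mulVec_smul, dotProduct_sub, dotProduct_smul,
          smul_eq_mul, hA.star_dotProduct_mulVec_comm]
    _ = _ := by
        rw [hvu, star_mul', ← mul_assoc, Complex.star_def, Complex.mul_conj', Complex.sub_re,
          ← Complex.ofReal_pow, Complex.re_ofReal_mul, Complex.conj_re]

end Forms

section TCRegularization

variable {n : ℕ}

lemma diffMatrix_transpose_mulVec (x : Fin (n + 1) → ℝ) :
    (diffMatrix n)ᵀ *ᵥ x = x - Fin.advance x := by
  ext i
  cases i using Fin.lastCases with
  | last =>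
    simp only [mulVec, dotProduct, diffMatrix, transpose_apply, Pi.sub_apply, Fin.advance_last,
      sub_zero]
    rw [Fintype.sum_eq_single (Fin.last n) fun j hj => ?_]
    · simp
    · have : n + 1 ≠ (j : ℕ) := by omega
      simp [hj, this]
  | cast i =>
    simp only [mulVec, dotProduct, diffMatrix, transpose_apply, Pi.sub_apply,
      Fin.advance_castSucc]
    rw [Fintype.sum_eq_add i.castSucc i.succ Fin.castSucc_lt_succ.ne fun j hj => ?_]
    · simp [Fin.ext_iff, sub_eq_add_neg]
    · simp only [ne_eq, Fin.ext_iff, Fin.val_castSucc, Fin.val_succ] at hj ⊢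
      simp [hj.1, Ne.symm hj.2]

variable {S : Matrix (Fin (n + 1)) (Fin (n + 1)) ℝ}

lemma IsToeplitz.dotProduct_mulVec_delay (hS : IsToeplitz S) {x y : Fin (n + 1) → ℝ} (hx : x (Fin.last n) = 0)
    (hy : y (Fin.last n) = 0) : Fin.delay x ⬝ᵥ S *ᵥ Fin.delay y = x ⬝ᵥ S *ᵥ y := by
  have hshift (i j : Fin n) : S i.succ j.succ = S i.castSucc j.castSucc :=
    hS _ _ _ _ (by simp)
  simp only [dotProduct, mulVec]
  conv_lhs => simp only [Fin.sum_univ_succ, Fin.delay_zero, Fin.delay_succ, zero_mul, mul_zero,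
    zero_add, hshift]
  conv_rhs => simp only [Fin.sum_univ_castSucc, hx, hy, zero_mul, mul_zero, add_zero]

lemma IsToeplitz.dotProduct_mulVec_le_delay (hS : IsToeplitz S) {d : Fin (n + 1) → ℝ} (hd : Monotone d)
    (hd₀ : 0 ≤ d 0) {x : Fin (n + 1) → ℝ} (hx : x (Fin.last n) = 0) :
    x ⬝ᵥ (S + diffMatrix n * diagonal d * (diffMatrix n)ᵀ) *ᵥ x ≤
      Fin.delay x ⬝ᵥ (S + diffMatrix n * diagonal d * (diffMatrix n)ᵀ) *ᵥ Fin.delay x := by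
  simp only [add_mulVec, dotProduct_add, hS.dotProduct_mulVec_delay hx hx,
    dotProduct_mul_diagonal_mul_transpose_mulVec, diffMatrix_transpose_mulVec,
    Fin.advance_delay hx]
  exact add_le_add le_rfl (Fin.sum_mul_sq_sub_advance_le hd hd₀ hx)

lemma IsToeplitz.re_star_dotProduct_mulVec_le_delay (hS : IsToeplitz S) {d : Fin (n + 1) → ℝ}
    (hd : Monotone d) (hd₀ : 0 ≤ d 0) {x : Fin (n + 1) → ℂ} (hx : x (Fin.last n) = 0) :
    (star x ⬝ᵥ (S + diffMatrix n * diagonal d * (diffMatrix n)ᵀ).map Complex.ofReal *ᵥ x).re ≤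
      (star (Fin.delay x) ⬝ᵥ
        (S + diffMatrix n * diagonal d * (diffMatrix n)ᵀ).map Complex.ofReal *ᵥ
          Fin.delay x).re := by
  simp only [re_star_dotProduct_map_ofReal_mulVec, Fin.comp_delay Complex.zero_re,
    Fin.comp_delay Complex.zero_im]
  exact add_le_add (hS.dotProduct_mulVec_le_delay hd hd₀ (by simp [hx]))
    (hS.dotProduct_mulVec_le_delay hd hd₀ (by simp [hx]))

end TCRegularization

/-- Proposition 2: minimum phase property of the regularized Yule-Walker solution
with TC-kernel regularization. -/
theorem regularized_yule_walker_min_phase_TC {n : ℕ}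
    (S : Matrix (Fin (n+1)) (Fin (n+1)) ℝ)
    (hpd : S.PosDef) (htoep : IsToeplitz S)
    (d : Fin (n+1) → ℝ)
    (hdpos : ∀ k, 0 < d k) (hdmono : Monotone d)
    (b : Fin (n+1) → ℝ) (hb : b ≠ 0) (c : ℝ)
    (hYW : (S + diffMatrix n * Matrix.diagonal d * (diffMatrix n)ᵀ) *ᵥ b
      = c • ((Pi.single (0 : Fin (n+1)) (1 : ℝ)) : Fin (n+1) → ℝ)) :
    ∀ z : ℂ, (∑ k : Fin (n+1), (b k : ℂ) * z ^ (n - (k : ℕ))) = 0 → ‖z‖ < 1 := by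
  intro z hz
  set u := horner (fun k => (b k : ℂ)) z
  have hu : u (Fin.last n) = 0 := (horner_last _ _).trans hz
  have hdecomp : u - z • Fin.delay u = fun k => (b k : ℂ) := horner_sub_smul_delay _ _
  have hdelay := htoep.re_star_dotProduct_mulVec_le_delay hdmono (hdpos 0).le hu
  set A := S + diffMatrix n * diagonal d * (diffMatrix n)ᵀ
  have hA : A.PosDef := hpd.add_posSemidef <| by
    simpa [conjTranspose_eq_transpose_of_trivial] using
      (PosSemidef.diagonal fun k => (hdpos k).le).mul_mul_conjTranspose_same (diffMatrix n)
  have horth : star (Fin.delay u) ⬝ᵥ A.map Complex.ofReal *ᵥ (u - z • Fin.delay u) = 0 := by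
    rw [hdecomp, map_ofReal_mulVec_ofReal, hYW]
    simp [dotProduct, Pi.single_apply, apply_ite]
  have hform := (hA.isHermitian.map _ fun r => by simp).re_dotProduct_mulVec_sub_smul horth
  rw [hdecomp, star_dotProduct_map_ofReal_mulVec_ofReal, Complex.ofReal_re] at hform
  have hQb : 0 < b ⬝ᵥ A *ᵥ b := by simpa using hA.dotProduct_mulVec_pos hb
  have hQv : 0 ≤ (star (Fin.delay u) ⬝ᵥ A.map Complex.ofReal *ᵥ Fin.delay u).re := by
    rw [re_star_dotProduct_map_ofReal_mulVec]
    exact add_nonneg (hA.posSemidef.dotProduct_mulVec_nonneg _)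
      (hA.posSemidef.dotProduct_mulVec_nonneg _)
  have hz2 : ‖z‖ ^ 2 < 1 := by
    by_contra! h
    nlinarith [mul_le_mul_of_nonneg_right h hQv]
  exact (sq_lt_one_iff₀ (norm_nonneg z)).1 hz2
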